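/- Let K, k, κ, K̄, a, d be as in the bordered-kernel setting, H := (K+aI)⁻¹K, and H̄ := (K̄+aI_{n+1})⁻¹K̄. Then for each i ∈ {1,…,n}, the i-th diagonal entry of H̄ satisfies 1 − h̄_{ii} = 1 − h_{ii} + a·d·(eᵢ'(K+aI)⁻¹k)², where eᵢ is the i-th standard basis vector of ℝⁿ. -/

import Mathlib

/-!
Since `(K + aI)⁻¹ K = I - a (K + aI)⁻¹`, both sides are statements about diagonal entries of
`(K + aI)⁻¹` and `(K̄ + aI)⁻¹`. The Schur complement of `K + aI` in the bordered matrix `K̄ + aI`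
is the scalar `1/d = κ + a - k'(K + aI)⁻¹k`, so the top-left block of `(K̄ + aI)⁻¹` is the
rank-one update `(K + aI)⁻¹ + d (K + aI)⁻¹ k k' (K + aI)⁻¹`.
-/

open Matrix

section

variable {m R : Type*} [DecidableEq m]

theorem Matrix.inv_add_smul_one_mul_self [Fintype m] [CommRing R] {K : Matrix m m R} {a : R}
    (h : IsUnit (K + a • 1).det) : (K + a • 1)⁻¹ * K = 1 - a • (K + a • 1)⁻¹ := by
  have hinv : (K + a • 1)⁻¹ * (K + a • 1) = 1 := nonsing_inv_mul _ h
  rw [Matrix.mul_add, Matrix.mul_smul, Matrix.mul_one] at hinv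
  rwa [eq_sub_iff_add_eq]

theorem Matrix.one_sub_inv_add_smul_one_mul_self_apply_self [Fintype m] [CommRing R]
    {K : Matrix m m R} {a : R} (h : IsUnit (K + a • 1).det) (i : m) :
    1 - ((K + a • 1)⁻¹ * K) i i = a * (K + a • 1)⁻¹ i i := by
  simp [inv_add_smul_one_mul_self h]

theorem Matrix.inv_fromBlocks_replicateCol_replicateRow_apply_inl_inl [Fintype m] [Field R]
    {A : Matrix m m R} {b c : m → R} {δ : R} (hA : IsUnit A.det)
    (hM : IsUnit (fromBlocks A (replicateCol (Fin 1) b) (replicateRow (Fin 1) c)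
      (of fun _ _ => δ)).det) (i j : m) :
    (fromBlocks A (replicateCol (Fin 1) b) (replicateRow (Fin 1) c) (of fun _ _ => δ))⁻¹
        (.inl i) (.inl j) =
      A⁻¹ i j + (A⁻¹ *ᵥ b) i * (c ᵥ* A⁻¹) j / (δ - c ⬝ᵥ A⁻¹ *ᵥ b) := by
  let := A.invertibleOfIsUnitDet hA
  let := invertibleOfIsUnitDet _ hM
  let := invertibleOfFromBlocks₁₁Invertible A (replicateCol (Fin 1) b) (replicateRow (Fin 1) c)
    (of fun _ _ => δ)
  have hschur : (of fun _ _ => δ) - replicateRow (Fin 1) c * A⁻¹ * replicateCol (Fin 1) b =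
      of fun _ _ => δ - c ⬝ᵥ A⁻¹ *ᵥ b := by
    rw [← replicateRow_vecMul, replicateRow_mul_replicateCol, dotProduct_mulVec]
    rfl
  rw [← invOf_eq_nonsing_inv, invOf_fromBlocks₁₁_eq, fromBlocks_apply₁₁]
  simp only [invOf_eq_nonsing_inv]
  rw [hschur, inv_subsingleton (of fun _ _ => _), ← replicateCol_mulVec,
    Matrix.mul_assoc _ _ A⁻¹, ← replicateRow_vecMul]
  simp only [of_apply, Ring.inverse_eq_inv', add_apply, mul_apply, Finset.univ_unique,
    Fin.default_eq_zero, replicateCol_apply, Finset.sum_singleton, replicateRow_apply,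
    diagonal_apply_eq, div_eq_mul_inv, add_right_inj]
  ring

theorem Matrix.fromBlocks_add_smul_one {n : Type*} [DecidableEq n] [Semiring R]
    (A : Matrix m m R) (B : Matrix m n R) (C : Matrix n m R) (D : Matrix n n R) (a : R) :
    fromBlocks A B C D + a • 1 = fromBlocks (A + a • 1) B C (D + a • 1) := by
  rw [← fromBlocks_one, fromBlocks_smul, fromBlocks_add]
  simp

theorem Matrix.PosSemidef.posDef_add_smul_one [Fintype m] [CommRing R] [NoZeroDivisors R]
    [PartialOrder R] [StarRing R] [StarOrderedRing R] [IsStrictOrderedRing R]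
    {K : Matrix m m R} (hK : K.PosSemidef) {a : R} (ha : 0 < a) : (K + a • 1).PosDef :=
  PosDef.posSemidef_add hK (PosDef.one.smul ha)

end

theorem bordered_hat_diag (n : ℕ)
    (K : Matrix (Fin n) (Fin n) ℝ) (k : Fin n → ℝ) (κ : ℝ)
    (Kbar : Matrix (Fin n ⊕ Fin 1) (Fin n ⊕ Fin 1) ℝ)
    (hKbar : Kbar = Matrix.fromBlocks K (Matrix.replicateCol (Fin 1) k) (Matrix.replicateRow (Fin 1) k)
        (Matrix.of fun _ _ => κ))
    (hpsd : Kbar.PosSemidef)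
    (a : ℝ) (ha : 0 < a)
    (d : ℝ)
    (hd : d = 1 / (κ + a - k ⬝ᵥ ((K + a • (1 : Matrix (Fin n) (Fin n) ℝ))⁻¹ *ᵥ k))) :
    ∀ i : Fin n,
      1 - ((Kbar + a • (1 : Matrix (Fin n ⊕ Fin 1) (Fin n ⊕ Fin 1) ℝ))⁻¹ * Kbar)
          (Sum.inl i) (Sum.inl i)
        = 1 - ((K + a • (1 : Matrix (Fin n) (Fin n) ℝ))⁻¹ * K) i i
            + a * d * (((K + a • (1 : Matrix (Fin n) (Fin n) ℝ))⁻¹ *ᵥ k) i) ^ 2 := by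
  intro i
  have hA : (K + a • 1).PosDef := ((hKbar ▸ hpsd).submatrix Sum.inl).posDef_add_smul_one ha
  have hM : (Kbar + a • 1).PosDef := hpsd.posDef_add_smul_one ha
  have hAdet := (isUnit_iff_isUnit_det _).mp hA.isUnit
  have hMdet := (isUnit_iff_isUnit_det _).mp hM.isUnit
  have hblocks : Kbar + a • 1 = fromBlocks (K + a • 1) (replicateCol (Fin 1) k)
      (replicateRow (Fin 1) k) (of fun _ _ => κ + a) := by
    rw [hKbar, fromBlocks_add_smul_one]
    congr
    ext
    simp [one_apply, Fin.fin_one_eq_zero]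
  have hvecMul : k ᵥ* (K + a • 1)⁻¹ = (K + a • 1)⁻¹ *ᵥ k := by
    rw [← vecMul_transpose, (isHermitian_iff_isSymm.mp hA.isHermitian.inv).eq]
  rw [one_sub_inv_add_smul_one_mul_self_apply_self hMdet,
    one_sub_inv_add_smul_one_mul_self_apply_self hAdet, hblocks,
    inv_fromBlocks_replicateCol_replicateRow_apply_inl_inl hAdet (hblocks ▸ hMdet), hvecMul, hd]
  ring
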